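/- arXiv:1707.07981 — 3 statements merged into one kernel-verified Lean document; each statement's English description precedes it below -/
import Mathlib

section
/- Let Ψ be a subroot system of the untwisted affine root system Φ. Then there exist a ℤ-linear function p : Gr(Ψ) → ℤ and nonnegative integers n_α (α ∈ Gr(Ψ)) such that Z_α(Ψ) = p(α) + n_α·ℤ for every α ∈ Gr(Ψ); in particular p(s_α(β)) = p(β) − ⟨β,α∨⟩·p(α) for all α, β ∈ Gr(Ψ). -/
/-!
The gradient `Gr Ψ` is itself a finite reduced crystallographic root system, and applying the
affine reflection `s_{α+rδ}` to `β+sδ` shows that `(r, s) ↦ s - ⟨β,α∨⟩ r` maps `Z_α × Z_β`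
into `Z_{s_α β}`. Fix a base of `Gr Ψ` and pick any value in `Z_α` for each simple root `α`;
since the simple roots are a `ℤ`-basis of the root lattice, these values extend to an additive
`p`. Every root is reached from the simple roots by simple reflections and `-1`, so
`p(α) ∈ Z_α` for all `α`. Finally `s_{α+rδ}(α+sδ) = -α + (s - 2r)δ` and `Ψ = -Ψ`, so `Z_α` is
stable under `(r, s) ↦ 2r - s`, which forces it to be an arithmetic progression through each of
its points.
-/

noncomputable section

variable {V : Type*} [NormedAddCommGroup V] [InnerProductSpace ℝ V]

/-- The Cartan pairing `⟨β, α∨⟩ = 2(β,α)/(α,α)`. -/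
def cartanPair (α β : V) : ℝ := 2 * (inner ℝ β α : ℝ) / (inner ℝ α α : ℝ)

/-- The reflection `s_α` on `V`: `s_α(β) = β - ⟨β,α∨⟩ α`. -/
def reflV (α β : V) : V := β - cartanPair α β • α

/-- The affine reflection `s_x` on `V × ℝ` with respect to the bilinear form
`B((x,a),(y,b)) = (x,y)`. -/
def reflA (x y : V × ℝ) : V × ℝ :=
  y - (2 * (inner ℝ y.1 x.1 : ℝ) / (inner ℝ x.1 x.1 : ℝ)) • x

/-- A finite irreducible reduced crystallographic root system in `V`. -/
structure IsIrreducibleRootSystem (R : Set V) : Prop where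
  finite : R.Finite
  spans : Submodule.span ℝ R = ⊤
  zero_notMem : (0 : V) ∉ R
  reduced : ∀ α ∈ R, ∀ c : ℝ, c • α ∈ R → c = 1 ∨ c = -1
  cartan_int : ∀ α ∈ R, ∀ β ∈ R, ∃ n : ℤ, cartanPair α β = (n : ℝ)
  refl_mem : ∀ α ∈ R, ∀ β ∈ R, reflV α β ∈ R
  irred : ∀ A B : Set V, R = A ∪ B → A.Nonempty → B.Nonempty →
    ∃ a ∈ A, ∃ b ∈ B, (inner ℝ a b : ℝ) ≠ 0

/-- A subroot system of a set `Φ` of affine roots: a nonempty proper subset stable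
under the reflections `s_x`, `x ∈ Ψ`. -/
def IsSubrootSystem (Φ Ψ : Set (V × ℝ)) : Prop :=
  Ψ.Nonempty ∧ Ψ ⊆ Φ ∧ Ψ ≠ Φ ∧ ∀ x ∈ Ψ, ∀ y ∈ Ψ, reflA x y ∈ Ψ

/-- `Ψ` is closed in `Φ`. -/
def IsClosedIn (Φ Ψ : Set (V × ℝ)) : Prop := ∀ x ∈ Ψ, ∀ y ∈ Ψ, x + y ∈ Φ → x + y ∈ Ψ

def IsClosedSubrootSystem (Φ Ψ : Set (V × ℝ)) : Prop :=
  IsSubrootSystem Φ Ψ ∧ IsClosedIn Φ Ψ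

/-- A maximal closed subroot system of `Φ`: any closed subroot system of `Φ`
containing it equals it. -/
def IsMaximalClosedSubrootSystem (Φ Ψ : Set (V × ℝ)) : Prop :=
  IsClosedSubrootSystem Φ Ψ ∧ ∀ Δ, IsClosedSubrootSystem Φ Δ → Ψ ⊆ Δ → Δ = Ψ

/-- A subroot system of a finite root system `R`. -/
def IsSubrootSystemF (R S : Set V) : Prop :=
  S.Nonempty ∧ S ⊆ R ∧ S ≠ R ∧ ∀ α ∈ S, ∀ β ∈ S, reflV α β ∈ S

/-- `S` is closed in the finite root system `R`. -/
def IsClosedInF (R S : Set V) : Prop := ∀ α ∈ S, ∀ β ∈ S, α + β ∈ R → α + β ∈ S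

def IsMaximalClosedSubrootSystemF (R S : Set V) : Prop :=
  (IsSubrootSystemF R S ∧ IsClosedInF R S) ∧
    ∀ T, IsSubrootSystemF R T → IsClosedInF R T → S ⊆ T → T = S

/-- A `ℤ`-linear function on `S`: the restriction to `S` of an additive group
homomorphism from the subgroup of `V` generated by `S` to `ℤ`. -/
def IsZLinearOn (S : Set V) (p : V → ℤ) : Prop :=
  ∃ f : AddSubgroup.closure S →+ ℤ,
    ∀ α, ∀ h : α ∈ S, p α = f ⟨α, AddSubgroup.subset_closure h⟩

/-- An irreducible subset: nonempty and not a union of two nonempty mutually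
orthogonal subsets. -/
def IsIrreducibleSubset (S : Set V) : Prop :=
  S.Nonempty ∧ ∀ A B : Set V, S = A ∪ B → A.Nonempty → B.Nonempty →
    ∃ a ∈ A, ∃ b ∈ B, (inner ℝ a b : ℝ) ≠ 0

/-- The untwisted affine root system attached to `R`. -/
def affineRS (R : Set V) : Set (V × ℝ) := {x | x.1 ∈ R ∧ ∃ r : ℤ, x.2 = (r : ℝ)}

/-- The gradient of a set of affine roots. -/
def Gr (Ψ : Set (V × ℝ)) : Set V := {α | ∃ r : ℤ, (α, (r : ℝ)) ∈ Ψ}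

/-- `Z_α(Ψ) = {r ∈ ℤ : α + rδ ∈ Ψ}`. -/
def ZSet (Ψ : Set (V × ℝ)) (α : V) : Set ℤ := {r | (α, (r : ℝ)) ∈ Ψ}

/-- The difference set `{r - r' : r, r' ∈ Z_α(Ψ)}`. -/
def DiffSet (Ψ : Set (V × ℝ)) (α : V) : Set ℤ :=
  {d | ∃ r ∈ ZSet Ψ α, ∃ r' ∈ ZSet Ψ α, d = r - r'}

/-- The lift `Ŝ = {α + rδ : α ∈ S, r ∈ ℤ}` of a subset `S` of the finite root system. -/
def liftF (S : Set V) : Set (V × ℝ) := {x | x.1 ∈ S ∧ ∃ r : ℤ, x.2 = (r : ℝ)}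

open Module Submodule RealInnerProductSpace

def cartanPairₗ (α : V) : V →ₗ[ℝ] ℝ where
  toFun := cartanPair α
  map_add' β γ := by simp only [cartanPair, inner_add_left]; ring
  map_smul' c β := by
    simp only [cartanPair, real_inner_smul_left, smul_eq_mul, RingHom.id_apply]; ring

@[simp]
lemma cartanPairₗ_apply (α β : V) : cartanPairₗ α β = cartanPair α β := rfl

lemma cartanPair_self {α : V} (hα : α ≠ 0) : cartanPair α α = 2 := by
  have : ⟪α, α⟫ ≠ 0 := inner_self_ne_zero.mpr hα
  rw [cartanPair]; field_simp

lemma reflV_self {α : V} (hα : α ≠ 0) : reflV α α = -α := by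
  rw [reflV, cartanPair_self hα, two_smul]; abel

lemma reflA_mk (α β : V) (a b : ℝ) :
    reflA (α, a) (β, b) = (reflV α β, b - cartanPair α β * a) := by
  simp [reflA, reflV, cartanPair]

lemma eq_of_cartanPair_eq_two {α β : V} (hα : α ≠ 0) (hβ : β ≠ 0)
    (hαβ : cartanPair α β = 2) (hβα : cartanPair β α = 2) : α = β := by
  rw [cartanPair, div_eq_iff (inner_self_ne_zero.mpr hα)] at hαβ
  rw [cartanPair, div_eq_iff (inner_self_ne_zero.mpr hβ)] at hβα
  rw [← sub_eq_zero, ← inner_self_eq_zero (𝕜 := ℝ), inner_sub_sub_self]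
  linarith [real_inner_comm α β]

lemma IsZLinearOn.apply_reflV {S : Set V} {p : V → ℤ} (hp : IsZLinearOn S p) {α β : V}
    (hα : α ∈ S) (hβ : β ∈ S) (hαβ : reflV α β ∈ S) {k : ℤ} (hk : cartanPair α β = k) :
    p (reflV α β) = p β - k * p α := by
  obtain ⟨F, hF⟩ := hp
  have : (⟨reflV α β, AddSubgroup.subset_closure hαβ⟩ : AddSubgroup.closure S) =
      ⟨β, AddSubgroup.subset_closure hβ⟩ - k • ⟨α, AddSubgroup.subset_closure hα⟩ :=
    Subtype.ext (by simp [reflV, hk, ← Int.cast_smul_eq_zsmul ℝ])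
  rw [hF _ hαβ, hF _ hβ, hF _ hα, this, map_sub, map_zsmul, smul_eq_mul]

structure IsRootSet (S : Set V) : Prop where
  zero_notMem : (0 : V) ∉ S
  reduced : ∀ α ∈ S, ∀ c : ℝ, c • α ∈ S → c = 1 ∨ c = -1
  cartan_int : ∀ α ∈ S, ∀ β ∈ S, ∃ n : ℤ, cartanPair α β = n
  refl_mem : ∀ α ∈ S, ∀ β ∈ S, reflV α β ∈ S

instance Submodule.finiteDimensional_span_of_finite (S : Set V) [Finite S] :
    FiniteDimensional ℝ (span ℝ S) :=
  FiniteDimensional.span_of_finite ℝ (Set.toFinite S)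

/-- The roots are placed in `span ℝ S` rather than in `V` so that they span their ambient
space, which `RootPairing.nonempty_base` needs. -/
def spanRoot (S : Set V) : S ↪ span ℝ S :=
  ⟨fun α => ⟨α, subset_span α.2⟩, fun _ _ h => Subtype.ext (congrArg Subtype.val h :)⟩

@[simp]
lemma coe_spanRoot_apply (S : Set V) (α : S) : (spanRoot S α : V) = α := rfl

lemma closure_le_span (S : Set V) : AddSubgroup.closure S ≤ (span ℝ S).toAddSubgroup :=
  AddSubgroup.closure_le _ |>.mpr subset_span

namespace IsRootSet

variable {S : Set V} (hS : IsRootSet S)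
include hS

lemma ne_zero {α : V} (hα : α ∈ S) : α ≠ 0 := fun h => hS.zero_notMem (h ▸ hα)

def coroot : S ↪ Dual ℝ (span ℝ S) :=
  ⟨fun α => (cartanPairₗ (α : V)).domRestrict _, fun α β h => Subtype.ext <|
    eq_of_cartanPair_eq_two (hS.ne_zero α.2) (hS.ne_zero β.2)
      (by simpa [cartanPair_self (hS.ne_zero β.2)] using LinearMap.congr_fun h (spanRoot S β))
      (by simpa [cartanPair_self (hS.ne_zero α.2)] using
        (LinearMap.congr_fun h (spanRoot S α)).symm)⟩

@[simp]
lemma coroot_apply (α : S) (x : span ℝ S) : hS.coroot α x = cartanPair (α : V) x := rfl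

variable [Finite S]

def rootPairing : RootPairing S ℝ (span ℝ S) (Dual ℝ (span ℝ S)) :=
  RootPairing.mk'' (Dual.eval ℝ _) (spanRoot S) hS.coroot
    (fun α => cartanPair_self (hS.ne_zero α.2))
    (by
      rintro α - ⟨β, rfl⟩
      exact ⟨⟨_, hS.refl_mem α α.2 β β.2⟩, Subtype.ext (by simp [preReflection_apply, reflV])⟩)
    (by
      have : Set.range (spanRoot S) = Subtype.val ⁻¹' S :=
        Set.ext fun x => ⟨by rintro ⟨α, rfl⟩; exact α.2, fun hx => ⟨⟨x, hx⟩, rfl⟩⟩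
      rw [this, span_span_coe_preimage])

@[simp]
lemma rootPairing_root (α : S) : hS.rootPairing.root α = spanRoot S α := rfl

@[simp]
lemma rootPairing_pairing (α β : S) : hS.rootPairing.pairing α β = cartanPair (β : V) α := rfl

lemma exists_intCast_eq_pairing (α β : S) : ∃ n : ℤ, n = hS.rootPairing.pairing α β := by
  obtain ⟨n, hn⟩ := hS.cartan_int β β.2 α α.2
  exact ⟨n, hn.symm⟩

instance : hS.rootPairing.IsCrystallographic :=
  ⟨fun α β => by simpa using hS.exists_intCast_eq_pairing α β⟩

instance : hS.rootPairing.IsRootSystem :=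
  RootPairing.isRootSystem_mk'' hS.exists_intCast_eq_pairing

instance : hS.rootPairing.IsReduced := by
  refine ⟨fun α β h => ?_⟩
  have hα : hS.rootPairing.root α ≠ 0 := hS.rootPairing.ne_zero α
  obtain ⟨c, hc⟩ : ∃ c : ℝ, c • hS.rootPairing.root α = hS.rootPairing.root β := by
    simpa only [LinearIndependent.pair_iff' hα, not_forall, not_not] using h
  have hcV : c • (α : V) = β := congrArg Subtype.val hc
  rcases hS.reduced α α.2 c (hcV ▸ β.2) with rfl | rfl
  · left
    ext
    simpa using hcV
  · right
    ext
    simp [← hcV]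

lemma coe_reflectionPerm (α β : S) :
    (hS.rootPairing.reflectionPerm α β : V) = reflV (α : V) β := by
  change (hS.rootPairing.root (hS.rootPairing.reflectionPerm α β) : V) = _
  rw [RootPairing.root_reflectionPerm, RootPairing.reflection_apply_root]
  simp [reflV]

lemma rootSpanMem_reflectionPerm (α β : S) :
    hS.rootPairing.rootSpanMem ℤ (hS.rootPairing.reflectionPerm α β) =
      hS.rootPairing.rootSpanMem ℤ β -
        hS.rootPairing.pairingIn ℤ β α • hS.rootPairing.rootSpanMem ℤ α := by
  apply Subtype.ext
  simp only [AddSubgroupClass.coe_sub, SetLike.val_smul]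
  exact (hS.rootPairing.root_reflectionPerm α β).trans (hS.rootPairing.reflection_apply_root' ℤ)

lemma mem_rootSpan_of_mem_closure {x : V} (hx : x ∈ AddSubgroup.closure S) :
    (⟨x, closure_le_span S hx⟩ : span ℝ S) ∈ hS.rootPairing.rootSpan ℤ := by
  induction hx using AddSubgroup.closure_induction with
  | mem x hx => exact subset_span ⟨⟨x, hx⟩, rfl⟩
  | zero => exact zero_mem _
  | add x y _ _ hx hy => exact add_mem hx hy
  | neg x _ hx => exact neg_mem hx

def closureToRootSpan : AddSubgroup.closure S →+ hS.rootPairing.rootSpan ℤ where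
  toFun x := ⟨_, hS.mem_rootSpan_of_mem_closure x.2⟩
  map_zero' := rfl
  map_add' _ _ := rfl

/-- Prescribe the values on a base, where the simple roots form a `ℤ`-basis of the root lattice,
and propagate `p α ∈ Z α` along simple reflections. -/
theorem exists_isZLinearOn_forall_mem (Z : V → Set ℤ) (hZne : ∀ α ∈ S, (Z α).Nonempty)
    (hZ : ∀ α ∈ S, ∀ β ∈ S, ∀ n : ℤ, cartanPair α β = n →
      ∀ r ∈ Z α, ∀ s ∈ Z β, s - n * r ∈ Z (reflV α β)) :
    ∃ p : V → ℤ, IsZLinearOn S p ∧ ∀ α ∈ S, p α ∈ Z α := by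
  classical
  set P := hS.rootPairing
  obtain ⟨b⟩ := P.nonempty_base
  choose r hr using fun α : S => hZne α α.2
  let φ : P.rootSpan ℤ →ₗ[ℤ] ℤ := b.toWeightBasisInt.constr ℤ fun i => r i
  have simple : ∀ β ∈ b.support, φ (P.rootSpanMem ℤ β) ∈ Z β := fun β hβ => by
    rw [show P.rootSpanMem ℤ β = b.toWeightBasisInt ⟨β, hβ⟩ from
      Subtype.ext (b.coe_toWeightBasisInt_apply ⟨β, hβ⟩).symm, Basis.constr_basis]
    exact hr β
  have step : ∀ β γ : S, φ (P.rootSpanMem ℤ β) ∈ Z β → φ (P.rootSpanMem ℤ γ) ∈ Z γ →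
      φ (P.rootSpanMem ℤ (P.reflectionPerm γ β)) ∈ Z (P.reflectionPerm γ β) := by
    intro β γ hβ hγ
    rw [hS.rootSpanMem_reflectionPerm, map_sub, map_zsmul, smul_eq_mul, coe_reflectionPerm]
    exact hZ γ γ.2 β β.2 _ (P.algebraMap_pairingIn ℤ β γ).symm _ hγ _ hβ
  let F := φ.toAddMonoidHom.comp hS.closureToRootSpan
  refine ⟨fun x => if h : x ∈ AddSubgroup.closure S then F ⟨x, h⟩ else 0,
    ⟨F, fun α hα => dif_pos _⟩, fun α hα => ?_⟩
  simp only [dif_pos (show α ∈ AddSubgroup.closure S from AddSubgroup.subset_closure hα)]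
  exact b.induction_reflect (p := fun β : S => φ (P.rootSpanMem ℤ β) ∈ Z β) ⟨α, hα⟩
    (fun β hβ => step β β hβ hβ) simple (fun β γ hβ hγ => step β γ hβ (simple γ hγ))

end IsRootSet

lemma exists_nat_eq_setOf_mul {D : Set ℤ} (h0 : 0 ∈ D)
    (hD : ∀ d ∈ D, ∀ e ∈ D, 2 * e - d ∈ D) : ∃ m : ℕ, D = {x | ∃ k : ℤ, x = m * k} := by
  classical
  have hneg : ∀ d ∈ D, -d ∈ D := fun d hd => by simpa using hD d hd 0 h0
  have hshift : ∀ d ∈ D, ∀ e ∈ D, ∀ j : ℤ, d + 2 * e * j ∈ D := by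
    intro d hd e he j
    induction j using Int.induction_on with
    | zero => simpa using hd
    | succ j ih => convert hD _ (hneg _ ih) e he using 1; ring
    | pred j ih => convert hneg _ (hD _ ih e he) using 1; ring
  by_cases hpos : ∃ n : ℕ, 0 < n ∧ (n : ℤ) ∈ D
  · obtain ⟨hg0, hgD⟩ := Nat.find_spec hpos
    set g := Nat.find hpos
    have hmin : ∀ d ∈ D, 0 < d → (g : ℤ) ≤ d := fun d hd hd0 => by
      have := Nat.find_min' hpos (m := d.toNat) ⟨by omega, by rwa [Int.toNat_of_nonneg hd0.le]⟩
      omega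
    refine ⟨g, Set.ext fun x => ⟨fun hx => ?_, ?_⟩⟩
    · -- `y = x mod 2g` lies in `D`, and so does its reflection `2g - y`; minimality of `g`
      -- leaves only `y = 0` and `y = g`.
      set y := x % (2 * g)
      have hxy : 2 * g * (x / (2 * g)) + y = x := Int.mul_ediv_add_emod x _
      have hy : y ∈ D := by
        convert hshift x hx g hgD (-(x / (2 * g))) using 1
        linarith
      have hy' := hD y hy g hgD
      have hy0 : 0 ≤ y := Int.emod_nonneg x (by omega)
      have hy2 : y < 2 * g := Int.emod_lt_of_pos x (by omega)
      have hyg : y = 0 ∨ y = g := by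
        by_contra! h
        have := hmin y hy (by omega)
        have := hmin _ hy' (by omega)
        omega
      rcases hyg with h | h
      · exact ⟨2 * (x / (2 * g)), by rw [h] at hxy; linear_combination -hxy⟩
      · exact ⟨2 * (x / (2 * g)) + 1, by rw [h] at hxy; linear_combination -hxy⟩
    · rintro ⟨k, rfl⟩
      have hk := Int.mul_ediv_add_emod k 2
      rcases Int.emod_two_eq_zero_or_one k with h | h <;> rw [h] at hk
      · convert hshift 0 h0 g hgD (k / 2) using 1; linear_combination -(g : ℤ) * hk
      · convert hshift g hgD g hgD (k / 2) using 1; linear_combination -(g : ℤ) * hk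
  · refine ⟨0, Set.ext fun x => ⟨fun hx => ⟨0, ?_⟩, fun ⟨k, hk⟩ => by simpa [hk] using h0⟩⟩
    have hnonpos : ∀ d ∈ D, ¬0 < d := fun d hd hd0 =>
      hpos ⟨d.toNat, by omega, by rwa [Int.toNat_of_nonneg hd0.le]⟩
    have := hnonpos x hx
    have := hnonpos (-x) (hneg x hx)
    omega

lemma exists_nat_eq_setOf_add_mul {A : Set ℤ} (hA : ∀ a ∈ A, ∀ b ∈ A, 2 * a - b ∈ A)
    {a : ℤ} (ha : a ∈ A) : ∃ m : ℕ, A = {x | ∃ k : ℤ, x = a + m * k} := by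
  obtain ⟨m, hm⟩ := exists_nat_eq_setOf_mul (D := {d | a + d ∈ A}) (by simpa using ha)
    fun d hd e he => by
      show a + (2 * e - d) ∈ A
      convert hA _ he _ hd using 1; ring
  refine ⟨m, Set.ext fun x => ?_⟩
  have := Set.ext_iff.mp hm (x - a)
  simp only [Set.mem_ofPred_eq, add_sub_cancel] at this
  simp only [Set.mem_ofPred_eq, this, ← sub_eq_iff_eq_add']

section SubrootSystem

variable {Ψ : Set (V × ℝ)} (hΨ : ∀ x ∈ Ψ, ∀ y ∈ Ψ, reflA x y ∈ Ψ)
include hΨ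

lemma sub_mul_mem_ZSet_reflV {α β : V} {n : ℤ} (hn : cartanPair α β = n) {r s : ℤ}
    (hr : r ∈ ZSet Ψ α) (hs : s ∈ ZSet Ψ β) : s - n * r ∈ ZSet Ψ (reflV α β) := by
  simpa [ZSet, reflA_mk, hn] using hΨ _ hr _ hs

lemma two_mul_sub_mem_ZSet {α : V} (hα : α ≠ 0) {a b : ℤ} (ha : a ∈ ZSet Ψ α)
    (hb : b ∈ ZSet Ψ α) : 2 * a - b ∈ ZSet Ψ α := by
  have h2 : ∀ {γ : V}, γ ≠ 0 → cartanPair γ γ = (2 : ℤ) := fun hγ => by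
    simpa using cartanPair_self hγ
  have h := sub_mul_mem_ZSet_reflV hΨ (h2 hα) ha hb
  rw [reflV_self hα] at h
  have h' := sub_mul_mem_ZSet_reflV hΨ (h2 (neg_ne_zero.mpr hα)) h h
  rw [reflV_self (neg_ne_zero.mpr hα), neg_neg] at h'
  convert h' using 1
  ring

lemma isRootSet_gr {R : Set V} (hR : IsIrreducibleRootSystem R) (hΨR : Ψ ⊆ affineRS R) :
    IsRootSet (Gr Ψ) := by
  have hGr : Gr Ψ ⊆ R := fun α ⟨_, hr⟩ => (hΨR hr).1
  refine ⟨fun h => hR.zero_notMem (hGr h), fun α hα c hc => hR.reduced α (hGr hα) c (hGr hc),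
    fun α hα β hβ => hR.cartan_int α (hGr hα) β (hGr hβ), fun α ⟨r, hr⟩ β ⟨s, hs⟩ => ?_⟩
  obtain ⟨n, hn⟩ := hR.cartan_int α (hGr ⟨r, hr⟩) β (hGr ⟨s, hs⟩)
  exact ⟨_, sub_mul_mem_ZSet_reflV hΨ hn hr hs⟩

end SubrootSystem

theorem statement0_general
    {V : Type*} [NormedAddCommGroup V] [InnerProductSpace ℝ V]
    (R : Set V) (hR : IsIrreducibleRootSystem R)
    (Ψ : Set (V × ℝ)) (hΨ : IsSubrootSystem (affineRS R) Ψ) :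
    ∃ (p : V → ℤ) (n : V → ℕ), IsZLinearOn (Gr Ψ) p ∧
      (∀ α ∈ Gr Ψ, ZSet Ψ α = {r : ℤ | ∃ k : ℤ, r = p α + (n α : ℤ) * k}) ∧
      ∀ α ∈ Gr Ψ, ∀ β ∈ Gr Ψ,
        (p (reflV α β) : ℝ) = (p β : ℝ) - cartanPair α β * (p α : ℝ) := by
  obtain ⟨-, hΨR, -, hΨrefl⟩ := hΨ
  have hS := isRootSet_gr hΨrefl hR hΨR
  have : Finite (Gr Ψ) := hR.finite.subset fun α ⟨_, hr⟩ => (hΨR hr).1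
  obtain ⟨p, hlin, hpZ⟩ := hS.exists_isZLinearOn_forall_mem (ZSet Ψ) (fun _ hα => hα)
    fun α _ β _ n hn r hr s hs => sub_mul_mem_ZSet_reflV hΨrefl hn hr hs
  choose! n hn using fun α hα => exists_nat_eq_setOf_add_mul
    (fun a ha b hb => two_mul_sub_mem_ZSet hΨrefl (hS.ne_zero hα) ha hb) (hpZ α hα)
  refine ⟨p, n, hlin, hn, fun α hα β hβ => ?_⟩
  obtain ⟨k, hk⟩ := hS.cartan_int α hα β hβ
  rw [hlin.apply_reflV hα hβ (hS.refl_mem α hα β hβ) hk, hk]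
  push_cast
  ring

/-- For a subroot system `Ψ` of the untwisted affine root system `Φ`
there are a `ℤ`-linear `p : Gr(Ψ) → ℤ` and nonnegative integers `n_α` with
`Z_α(Ψ) = p(α) + n_α·ℤ` for all `α ∈ Gr(Ψ)`; in particular
`p(s_α(β)) = p(β) − ⟨β,α∨⟩·p(α)` for all `α, β ∈ Gr(Ψ)`. -/
theorem statement0
    {V : Type*} [NormedAddCommGroup V] [InnerProductSpace ℝ V] [FiniteDimensional ℝ V]
    (R : Set V) (hR : IsIrreducibleRootSystem R)
    (Ψ : Set (V × ℝ)) (hΨ : IsSubrootSystem (affineRS R) Ψ) :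
    ∃ (p : V → ℤ) (n : V → ℕ), IsZLinearOn (Gr Ψ) p ∧
      (∀ α ∈ Gr Ψ, ZSet Ψ α = {r : ℤ | ∃ k : ℤ, r = p α + (n α : ℤ) * k}) ∧
      ∀ α ∈ Gr Ψ, ∀ β ∈ Gr Ψ,
        (p (reflV α β) : ℝ) = (p β : ℝ) - cartanPair α β * (p α : ℝ) :=
  statement0_general R hR Ψ hΨ
end
end

section
/- Let Ψ be a closed subroot system of the twisted affine root system Φ. Then one of the following holds: (1) Gr(Ψ) = Φ̊; (2) Gr(Ψ) is a proper subset of Φ̊ that is closed in Φ̊; (3) Gr(Ψ) is a proper subset of Φ̊ that is semi-closed. In particular, whenever α, β ∈ Gr(Ψ) and α + β ∈ Φ̊ ∖ Gr(Ψ), both α and β are short roots and α + β is a long root. -/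
noncomputable section

variable {V : Type*} [NormedAddCommGroup V] [InnerProductSpace ℝ V]

/-- A short root: squared length `a`. -/
def ShortR (R : Set V) (a : ℝ) (α : V) : Prop := α ∈ R ∧ (inner ℝ α α : ℝ) = a

/-- A long root: squared length `b`. -/
def LongR (R : Set V) (b : ℝ) (α : V) : Prop := α ∈ R ∧ (inner ℝ α α : ℝ) = b

/-- The data of a non simply laced irreducible root system `R` with short squared
length `a`, long squared length `b = m·a`, `m ∈ {2,3}`. -/
structure IsTwistedData (R : Set V) (a b : ℝ) (m : ℕ) : Prop where
  root : IsIrreducibleRootSystem R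
  len : ∀ α ∈ R, (inner ℝ α α : ℝ) = a ∨ (inner ℝ α α : ℝ) = b
  a_pos : 0 < a
  a_lt_b : a < b
  ex_short : ∃ α ∈ R, (inner ℝ α α : ℝ) = a
  ex_long : ∃ α ∈ R, (inner ℝ α α : ℝ) = b
  ratio : b = (m : ℝ) * a
  m23 : m = 2 ∨ m = 3

/-- The twisted affine root system attached to `(R, a, b, m)`. -/
def twistedRS (R : Set V) (a b : ℝ) (m : ℕ) : Set (V × ℝ) :=
  {x | (ShortR R a x.1 ∧ ∃ r : ℤ, x.2 = (r : ℝ)) ∨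
       (LongR R b x.1 ∧ ∃ r : ℤ, x.2 = (m : ℝ) * (r : ℝ))}

/-- The gradient of a set of affine roots (twisted case). -/
def GrT (Ψ : Set (V × ℝ)) : Set V := {α | ∃ c : ℝ, (α, c) ∈ Ψ}

/-- `Z_α(Ψ) = {c ∈ ℤ : α + cδ ∈ Ψ}`. -/
def ZSetT (Ψ : Set (V × ℝ)) (α : V) : Set ℤ := {c | (α, (c : ℝ)) ∈ Ψ}

/-- The difference set `{r - r' : r, r' ∈ Z_α(Ψ)}`. -/
def DiffSetT (Ψ : Set (V × ℝ)) (α : V) : Set ℤ :=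
  {d | ∃ r ∈ ZSetT Ψ α, ∃ r' ∈ ZSetT Ψ α, d = r - r'}

/-- A semi-closed subset of `R`: not closed, and any failure of closedness comes
from two short roots summing to a long root. -/
def IsSemiClosed (R : Set V) (a b : ℝ) (S : Set V) : Prop :=
  ¬ IsClosedInF R S ∧
    ∀ α ∈ S, ∀ β ∈ S, α + β ∈ R \ S →
      ShortR R a α ∧ ShortR R a β ∧ LongR R b (α + β)

/-- The lift of a subset `S ⊆ R` in the twisted affine root system. -/
def liftT (R : Set V) (a b : ℝ) (m : ℕ) (S : Set V) : Set (V × ℝ) :=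
  {x | (ShortR R a x.1 ∧ x.1 ∈ S ∧ ∃ r : ℤ, x.2 = (r : ℝ)) ∨
       (LongR R b x.1 ∧ x.1 ∈ S ∧ ∃ r : ℤ, x.2 = (m : ℝ) * (r : ℝ))}

/-!
A failure of closedness of `Gr(Ψ)` comes from `α + cδ, β + dδ ∈ Ψ` with `α + β ∈ Φ̊` but
`α + β + (c + d)δ ∉ Φ`. Since `Φ` contains every short root at every integer level and every
long root at every level in `mℤ`, this forces `α + β` to be long and `α, β` not both long.
A long and a short root cannot add up to a long root either: that would give
`⟨β, α∨⟩ = -1/m ∉ ℤ`.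
-/

namespace IsTwistedData

variable {R : Set V} {a b : ℝ} {m : ℕ}

theorem shortR_or_longR (hT : IsTwistedData R a b m) {α : V} (hα : α ∈ R) :
    ShortR R a α ∨ LongR R b α :=
  (hT.len α hα).imp (⟨hα, ·⟩) (⟨hα, ·⟩)

theorem not_longR_add_of_longR_of_shortR (hT : IsTwistedData R a b m) {α β : V}
    (hα : LongR R b α) (hβ : ShortR R a β) : ¬ LongR R b (α + β) := by
  rintro ⟨-, hsum⟩
  obtain ⟨n, hn⟩ := hT.root.cartan_int α hα.1 β hβ.1
  have hb : 0 < b := hT.a_pos.trans hT.a_lt_b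
  have hinner : 2 * (inner ℝ β α : ℝ) = -a := by
    rw [real_inner_add_add_self, hα.2, hβ.2] at hsum
    rw [real_inner_comm]
    linarith
  have hna : (n : ℝ) * b = -a := by
    rw [cartanPair, hinner, hα.2, div_eq_iff hb.ne'] at hn
    linarith
  have hn_neg : n < 0 := by
    have : (n : ℝ) < 0 := by nlinarith [hT.a_pos]
    exact_mod_cast this
  have hn_gt : -1 < n := by
    have : (-1 : ℝ) < n := by nlinarith [hT.a_lt_b]
    exact_mod_cast this
  omega

end IsTwistedData

section twistedRS

variable {R : Set V} {a b : ℝ} {m : ℕ}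

theorem mk_mem_twistedRS_of_shortR {α : V} (hα : ShortR R a α) (r : ℤ) :
    (α, (r : ℝ)) ∈ twistedRS R a b m :=
  Or.inl ⟨hα, r, rfl⟩

theorem mk_mem_twistedRS_of_longR {α : V} (hα : LongR R b α) (r : ℤ) :
    (α, (m : ℝ) * r) ∈ twistedRS R a b m :=
  Or.inr ⟨hα, r, rfl⟩

theorem fst_mem_of_mem_twistedRS {x : V × ℝ} (hx : x ∈ twistedRS R a b m) : x.1 ∈ R := by
  rcases hx with ⟨hs, -⟩ | ⟨hl, -⟩
  exacts [hs.1, hl.1]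

theorem exists_int_of_mem_twistedRS {x : V × ℝ} (hx : x ∈ twistedRS R a b m) :
    ∃ r : ℤ, x.2 = r := by
  rcases hx with ⟨-, r, hr⟩ | ⟨-, r, hr⟩
  · exact ⟨r, hr⟩
  · exact ⟨m * r, by rw [hr]; push_cast; ring⟩

theorem exists_mul_of_mem_twistedRS_of_longR (hab : a ≠ b) {x : V × ℝ}
    (hx : x ∈ twistedRS R a b m) (hlong : LongR R b x.1) : ∃ r : ℤ, x.2 = m * r := by
  rcases hx with ⟨hs, -⟩ | ⟨-, hr⟩
  · exact absurd (hs.2.symm.trans hlong.2) hab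
  · exact hr

theorem GrT_subset_of_subset_twistedRS {Ψ : Set (V × ℝ)} (hΨ : Ψ ⊆ twistedRS R a b m) :
    GrT Ψ ⊆ R := fun _ ⟨_, hc⟩ ↦ fst_mem_of_mem_twistedRS (hΨ hc)

end twistedRS

theorem IsClosedIn.mem_GrT_add {W : Type*} [NormedAddCommGroup W] {Φ Ψ : Set (W × ℝ)}
    (hcl : IsClosedIn Φ Ψ) {α β : W}
    {c d : ℝ} (hα : (α, c) ∈ Ψ) (hβ : (β, d) ∈ Ψ) (hsum : (α + β, c + d) ∈ Φ) :
    α + β ∈ GrT Ψ :=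
  ⟨c + d, hcl _ hα _ hβ hsum⟩

section closedSubset

variable {R : Set V} {a b : ℝ} {m : ℕ} {Ψ : Set (V × ℝ)}

theorem longR_add_of_add_notMem_GrT (hΨ : Ψ ⊆ twistedRS R a b m)
    (hcl : IsClosedIn (twistedRS R a b m) Ψ) (hT : IsTwistedData R a b m) {α β : V}
    {c d : ℝ} (hα : (α, c) ∈ Ψ) (hβ : (β, d) ∈ Ψ) (hsum : α + β ∈ R \ GrT Ψ) :
    LongR R b (α + β) := by
  refine (hT.shortR_or_longR hsum.1).resolve_left fun hshort ↦ hsum.2 ?_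
  obtain ⟨r, hr⟩ := exists_int_of_mem_twistedRS (hΨ hα)
  obtain ⟨s, hs⟩ := exists_int_of_mem_twistedRS (hΨ hβ)
  refine hcl.mem_GrT_add hα hβ ?_
  have := mk_mem_twistedRS_of_shortR (b := b) (m := m) hshort (r + s)
  rwa [Int.cast_add, ← hr, ← hs] at this

theorem shortR_left_of_add_notMem_GrT (hΨ : Ψ ⊆ twistedRS R a b m)
    (hcl : IsClosedIn (twistedRS R a b m) Ψ) (hT : IsTwistedData R a b m) {α β : V}
    {c d : ℝ} (hα : (α, c) ∈ Ψ) (hβ : (β, d) ∈ Ψ) (hsum : α + β ∈ R \ GrT Ψ) :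
    ShortR R a α := by
  have hlong_sum := longR_add_of_add_notMem_GrT hΨ hcl hT hα hβ hsum
  refine (hT.shortR_or_longR (fst_mem_of_mem_twistedRS (hΨ hα))).resolve_right
    fun hlong ↦ ?_
  rcases hT.shortR_or_longR (fst_mem_of_mem_twistedRS (hΨ hβ)) with hβs | hβl
  · exact hT.not_longR_add_of_longR_of_shortR hlong hβs hlong_sum
  · have hab := hT.a_lt_b.ne
    obtain ⟨r, hr⟩ := exists_mul_of_mem_twistedRS_of_longR hab (hΨ hα) hlong
    obtain ⟨s, hs⟩ := exists_mul_of_mem_twistedRS_of_longR hab (hΨ hβ) hβl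
    refine hsum.2 (hcl.mem_GrT_add hα hβ ?_)
    have := mk_mem_twistedRS_of_longR (a := a) (m := m) hlong_sum (r + s)
    rwa [Int.cast_add, mul_add, ← hr, ← hs] at this

theorem short_short_long_of_add_notMem_GrT (hΨ : Ψ ⊆ twistedRS R a b m)
    (hcl : IsClosedIn (twistedRS R a b m) Ψ) (hT : IsTwistedData R a b m) :
    ∀ α ∈ GrT Ψ, ∀ β ∈ GrT Ψ, α + β ∈ R \ GrT Ψ →
      ShortR R a α ∧ ShortR R a β ∧ LongR R b (α + β) := by
  rintro α ⟨c, hα⟩ β ⟨d, hβ⟩ hsum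
  have hsum' : β + α ∈ R \ GrT Ψ := add_comm α β ▸ hsum
  exact ⟨shortR_left_of_add_notMem_GrT hΨ hcl hT hα hβ hsum,
    shortR_left_of_add_notMem_GrT hΨ hcl hT hβ hα hsum',
    longR_add_of_add_notMem_GrT hΨ hcl hT hα hβ hsum⟩

end closedSubset

theorem eq_or_isClosedInF_or_isSemiClosed {R S : Set V} {a b : ℝ} (hSR : S ⊆ R)
    (hS : ∀ α ∈ S, ∀ β ∈ S, α + β ∈ R \ S → ShortR R a α ∧ ShortR R a β ∧ LongR R b (α + β)) :
    S = R ∨ (S ⊂ R ∧ IsClosedInF R S) ∨ (S ⊂ R ∧ IsSemiClosed R a b S) := by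
  by_cases hSR' : S = R
  · exact Or.inl hSR'
  by_cases hclosed : IsClosedInF R S
  · exact Or.inr (Or.inl ⟨hSR.ssubset_of_ne hSR', hclosed⟩)
  · exact Or.inr (Or.inr ⟨hSR.ssubset_of_ne hSR', hclosed, hS⟩)

theorem statement8_general
    {V : Type*} [NormedAddCommGroup V] [InnerProductSpace ℝ V]
    (R : Set V) (a b : ℝ) (m : ℕ) (hT : IsTwistedData R a b m)
    (Ψ : Set (V × ℝ)) (hΨ : IsClosedSubrootSystem (twistedRS R a b m) Ψ) :
    (GrT Ψ = R ∨
     (GrT Ψ ⊂ R ∧ IsClosedInF R (GrT Ψ)) ∨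
     (GrT Ψ ⊂ R ∧ IsSemiClosed R a b (GrT Ψ))) ∧
    ∀ α ∈ GrT Ψ, ∀ β ∈ GrT Ψ, α + β ∈ R \ GrT Ψ →
      ShortR R a α ∧ ShortR R a β ∧ LongR R b (α + β) := by
  obtain ⟨⟨-, hΨΦ, -, -⟩, hcl⟩ := hΨ
  have hgrad := short_short_long_of_add_notMem_GrT hΨΦ hcl hT
  exact ⟨eq_or_isClosedInF_or_isSemiClosed (GrT_subset_of_subset_twistedRS hΨΦ) hgrad, hgrad⟩

/-- The gradient of a closed subroot system of a twisted affine root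
system is either all of `Φ̊`, or a proper closed subset, or a proper semi-closed
subset; in particular failures of closedness involve two short roots summing to a
long root. -/
theorem statement8
    {V : Type*} [NormedAddCommGroup V] [InnerProductSpace ℝ V] [FiniteDimensional ℝ V]
    (R : Set V) (a b : ℝ) (m : ℕ) (hT : IsTwistedData R a b m)
    (Ψ : Set (V × ℝ)) (hΨ : IsClosedSubrootSystem (twistedRS R a b m) Ψ) :
    (GrT Ψ = R ∨
     (GrT Ψ ⊂ R ∧ IsClosedInF R (GrT Ψ)) ∨
     (GrT Ψ ⊂ R ∧ IsSemiClosed R a b (GrT Ψ))) ∧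
    ∀ α ∈ GrT Ψ, ∀ β ∈ GrT Ψ, α + β ∈ R \ GrT Ψ →
      ShortR R a α ∧ ShortR R a β ∧ LongR R b (α + β) :=
  statement8_general R a b m hT Ψ hΨ
end
end

section
/- Let Ψ be a closed subroot system of the twisted affine root system Φ such that Gr(Ψ) is irreducible and contains both a short root and a long root of Φ̊. Then for every short root α ∈ Gr(Ψ) and every long root β ∈ Gr(Ψ), {r − r′ : r, r′ ∈ Z_α(Ψ)} ∩ mℤ = {r − r′ : r, r′ ∈ Z_β(Ψ)}. Equivalently, if n_s, n_ℓ ≥ 0 are defined by {r − r′ : r, r′ ∈ Z_α(Ψ)} = n_sℤ and {r − r′ : r, r′ ∈ Z_β(Ψ)} = n_ℓℤ, then n_ℓ = n_s when m divides n_s, and n_ℓ = m·n_s otherwise. -/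
noncomputable section

variable {V : Type*} [NormedAddCommGroup V] [InnerProductSpace ℝ V]

open scoped InnerProductSpace

/-!
Reflecting `β + rδ` in `γ + cδ` gives `s_γ β + (r − ⟨β, γ∨⟩c)δ`; reflecting once more in
`γ + c'δ` brings the gradient back to `β` and shifts `r` by `⟨β, γ∨⟩(c' − c)`. So
`D(γ) = {r − r' : r, r' ∈ Z_γ(Ψ)}` is carried into `D(β)` whenever `⟨β, γ∨⟩ = ±1`. Non-orthogonal
roots of equal length, other than `±γ`, pair to `±1` both ways and so have the same `D`. A short `α`
and a long `β` that are not orthogonal have `⟨α, β∨⟩ = ±1`, whence `D(β) ⊆ D(α)`; conversely, if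
`⟨α, β∨⟩ = −1`, `m ∣ r − r'` and `c ∈ Z_β(Ψ)`, closedness applied to
`s_β(α) + (r + c)δ = α + β + (r + c)δ` and `−α − r'δ` puts `β + (r − r' + c)δ` in `Ψ`, so
`D(α) ∩ mℤ ⊆ D(β)`. As `D(β) ⊆ mℤ` for long `β`, the set `D(γ) ∩ mℤ` agrees on non-orthogonal roots
of `Gr(Ψ)`, and irreducibility of `Gr(Ψ)` makes it constant.
-/

section Pairing

variable {γ δ : V}

lemma cartanPair_self_s9 (h : ⟪γ, γ⟫_ℝ ≠ 0) : cartanPair γ γ = 2 := by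
  unfold cartanPair
  field_simp

lemma cartanPair_neg_left (γ δ : V) : cartanPair (-γ) δ = -cartanPair γ δ := by
  unfold cartanPair
  rw [inner_neg_right, inner_neg_neg]
  ring

lemma cartanPair_sub_smul (h : ⟪γ, γ⟫_ℝ ≠ 0) (δ : V) (t : ℝ) :
    cartanPair γ (δ - t • γ) = cartanPair γ δ - 2 * t := by
  unfold cartanPair
  rw [inner_sub_left, real_inner_smul_left]
  field_simp

lemma cartanPair_ne_zero (h : ⟪γ, δ⟫_ℝ ≠ 0) : cartanPair γ δ ≠ 0 := by
  have hγ : ⟪γ, γ⟫_ℝ ≠ 0 := inner_self_ne_zero.2 fun h0 => h (by rw [h0, inner_zero_left])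
  unfold cartanPair
  rw [real_inner_comm]
  positivity

lemma cartanPair_sq_mul_inner_self_le (γ δ : V) :
    cartanPair γ δ ^ 2 * ⟪γ, γ⟫_ℝ ≤ 4 * ⟪δ, δ⟫_ℝ := by
  have hδ : 0 ≤ ⟪δ, δ⟫_ℝ := real_inner_self_nonneg
  rcases (real_inner_self_nonneg (x := γ)).eq_or_lt with h | h
  · rw [← h, mul_zero]
    positivity
  · unfold cartanPair
    rw [div_pow, div_mul_eq_mul_div, div_le_iff₀ (by positivity)]
    nlinarith [real_inner_mul_inner_self_le δ γ]

lemma cartanPair_eq_one_or_neg_one_of_two_mul_le (hint : ∃ k : ℤ, cartanPair γ δ = k)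
    (hlen : 2 * ⟪δ, δ⟫_ℝ ≤ ⟪γ, γ⟫_ℝ) (hne : ⟪γ, δ⟫_ℝ ≠ 0) :
    cartanPair γ δ = 1 ∨ cartanPair γ δ = -1 := by
  obtain ⟨k, hk⟩ := hint
  have hδ : 0 < ⟪δ, δ⟫_ℝ := real_inner_self_pos.2 fun h0 => hne (by rw [h0, inner_zero_right])
  have hk0 : k ≠ 0 := by exact_mod_cast hk ▸ cartanPair_ne_zero hne
  have hbound := cartanPair_sq_mul_inner_self_le γ δ
  rw [hk] at hbound
  have hk2 : (k : ℝ) ^ 2 ≤ 2 := by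
    nlinarith [mul_le_mul_of_nonneg_left hlen (sq_nonneg (k : ℝ))]
  have hk1 : -1 ≤ k ∧ k ≤ 1 := by
    have : k ^ 2 ≤ 2 := by exact_mod_cast hk2
    constructor <;> nlinarith
  rw [hk]
  rcases (by omega : k = 1 ∨ k = -1) with rfl | rfl <;> simp

lemma cartanPair_eq_one_or_neg_one_of_inner_self_eq (hint : ∃ k : ℤ, cartanPair γ δ = k)
    (hlen : ⟪γ, γ⟫_ℝ = ⟪δ, δ⟫_ℝ) (hne : ⟪γ, δ⟫_ℝ ≠ 0) (h₁ : δ ≠ γ) (h₂ : δ ≠ -γ) :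
    cartanPair γ δ = 1 ∨ cartanPair γ δ = -1 := by
  obtain ⟨k, hk⟩ := hint
  have hγ : 0 < ⟪γ, γ⟫_ℝ := real_inner_self_pos.2 fun h0 => hne (by rw [h0, inner_zero_left])
  have hk0 : k ≠ 0 := by exact_mod_cast hk ▸ cartanPair_ne_zero hne
  have hbound := cartanPair_sq_mul_inner_self_le γ δ
  rw [hk, ← hlen] at hbound
  have hk2 : k ^ 2 ≤ 4 := by
    have : (k : ℝ) ^ 2 ≤ 4 := le_of_mul_le_mul_right (by linarith) hγ
    exact_mod_cast this
  have hpair : 2 * ⟪γ, δ⟫_ℝ = k * ⟪γ, γ⟫_ℝ := by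
    unfold cartanPair at hk
    field_simp at hk
    rw [real_inner_comm]
    linarith
  -- `⟨δ, γ∨⟩ = ±2` between roots of equal length forces `δ = ±γ`
  have hnorm (t : ℝ) : ⟪δ - t • γ, δ - t • γ⟫_ℝ = ⟪γ, γ⟫_ℝ * (1 - k * t + t ^ 2) := by
    simp only [inner_sub_left, inner_sub_right, real_inner_smul_left, real_inner_smul_right,
      real_inner_comm γ δ, ← hlen]
    linear_combination (-t) * hpair
  have hk1 : k ≠ 2 ∧ k ≠ -2 := by
    constructor
    · rintro rfl
      refine h₁ (sub_eq_zero.1 ?_)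
      simpa using inner_self_eq_zero.1 ((hnorm 1).trans (by push_cast; ring))
    · rintro rfl
      refine h₂ (sub_eq_zero.1 ?_)
      simpa using inner_self_eq_zero.1 ((hnorm (-1)).trans (by push_cast; ring))
  have hk3 : -2 ≤ k ∧ k ≤ 2 := by constructor <;> nlinarith
  rw [hk]
  rcases (by omega : k = 1 ∨ k = -1) with rfl | rfl <;> simp

end Pairing

lemma IsIrreducibleSubset.eq_of_forall_inner_ne_zero {S : Set V} {X : Type*} {f : V → X}
    (hS : IsIrreducibleSubset S) (hf : ∀ x ∈ S, ∀ y ∈ S, ⟪x, y⟫_ℝ ≠ 0 → f x = f y)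
    {x y : V} (hx : x ∈ S) (hy : y ∈ S) : f x = f y := by
  by_contra hxy
  obtain ⟨u, hu, v, hv, huv⟩ := hS.2 {z ∈ S | f z = f x} {z ∈ S | f z ≠ f x}
    (by ext z; by_cases f z = f x <;> simp [*]) ⟨x, hx, rfl⟩ ⟨y, hy, Ne.symm hxy⟩
  exact hv.2 ((hf v hv.1 u hu.1 (by rwa [real_inner_comm])).trans hu.2)

lemma neg_mem_DiffSetT {W : Type*} {Ψ : Set (W × ℝ)} {γ : W} {d : ℤ}
    (hd : d ∈ DiffSetT Ψ γ) : -d ∈ DiffSetT Ψ γ := by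
  obtain ⟨r, hr, r', hr', rfl⟩ := hd
  exact ⟨r', hr', r, hr, by ring⟩

section Twisted

variable {R : Set V} {a b : ℝ} {m : ℕ} {Ψ : Set (V × ℝ)} {γ δ : V}

lemma dvd_of_mk_mem_twistedRS (hab : a ≠ b) (hγ : ⟪γ, γ⟫_ℝ = b) {c : ℤ}
    (h : (γ, (c : ℝ)) ∈ twistedRS R a b m) : (m : ℤ) ∣ c := by
  rcases h with ⟨hs, _⟩ | ⟨_, r, hr⟩
  · exact absurd (hs.2.symm.trans hγ) hab
  · have hr' : (c : ℝ) = m * r := hr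
    exact ⟨r, by exact_mod_cast hr'⟩

lemma mk_mem_twistedRS_of_dvd (hγ : LongR R b γ) {c : ℤ} (h : (m : ℤ) ∣ c) :
    (γ, (c : ℝ)) ∈ twistedRS R a b m := by
  obtain ⟨r, rfl⟩ := h
  exact Or.inr ⟨hγ, r, by push_cast; ring⟩

namespace IsSubrootSystem

lemma fst_mem (hΨ : IsSubrootSystem (twistedRS R a b m) Ψ) {x : V × ℝ} (hx : x ∈ Ψ) :
    x.1 ∈ R := by
  rcases hΨ.2.1 hx with ⟨h, _⟩ | ⟨h, _⟩ <;> exact h.1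

lemma mem_of_mem_GrT (hΨ : IsSubrootSystem (twistedRS R a b m) Ψ) (h : γ ∈ GrT Ψ) : γ ∈ R :=
  let ⟨_, hc⟩ := h
  hΨ.fst_mem hc

lemma inner_self_ne_zero (hΨ : IsSubrootSystem (twistedRS R a b m) Ψ) (h0 : (0 : V) ∉ R)
    {c : ℝ} (h : (γ, c) ∈ Ψ) : ⟪γ, γ⟫_ℝ ≠ 0 :=
  _root_.inner_self_ne_zero.2 (ne_of_mem_of_not_mem (hΨ.fst_mem h) h0)

lemma reflect_mem (hΨ : IsSubrootSystem (twistedRS R a b m) Ψ) {c d : ℝ} (h : (γ, c) ∈ Ψ)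
    (h' : (δ, d) ∈ Ψ) : (δ - cartanPair γ δ • γ, d - cartanPair γ δ * c) ∈ Ψ :=
  hΨ.2.2.2 _ h _ h'

lemma neg_mem (hΨ : IsSubrootSystem (twistedRS R a b m) Ψ) (h0 : (0 : V) ∉ R) {c : ℝ}
    (h : (γ, c) ∈ Ψ) : (-γ, -c) ∈ Ψ := by
  have h' := hΨ.reflect_mem h h
  rwa [cartanPair_self_s9 (hΨ.inner_self_ne_zero h0 h), two_smul, two_mul,
    sub_add_cancel_left, sub_add_cancel_left] at h'

lemma neg_mem_GrT (hΨ : IsSubrootSystem (twistedRS R a b m) Ψ) (h0 : (0 : V) ∉ R)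
    (h : γ ∈ GrT Ψ) : -γ ∈ GrT Ψ :=
  let ⟨c, hc⟩ := h
  ⟨-c, hΨ.neg_mem h0 hc⟩

lemma ZSetT_nonempty (hΨ : IsSubrootSystem (twistedRS R a b m) Ψ) (h : γ ∈ GrT Ψ) :
    (ZSetT Ψ γ).Nonempty := by
  obtain ⟨c, hc⟩ := h
  rcases hΨ.2.1 hc with ⟨_, r, hr⟩ | ⟨_, r, hr⟩
  · exact ⟨r, show (γ, ((r : ℤ) : ℝ)) ∈ Ψ by rwa [← (hr : c = r)]⟩
  · exact ⟨m * r, show (γ, ((m * r : ℤ) : ℝ)) ∈ Ψ by push_cast; rwa [← (hr : c = _)]⟩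

lemma sub_mul_sub_mem_ZSetT (hΨ : IsSubrootSystem (twistedRS R a b m) Ψ) (h0 : (0 : V) ∉ R)
    {k : ℤ} (hk : cartanPair γ δ = k) {c c' r : ℤ} (hc : c ∈ ZSetT Ψ γ) (hc' : c' ∈ ZSetT Ψ γ)
    (hr : r ∈ ZSetT Ψ δ) : r - k * (c - c') ∈ ZSetT Ψ δ := by
  have h₁ := hΨ.reflect_mem hc hr
  have h₂ := hΨ.reflect_mem hc' h₁
  rw [cartanPair_sub_smul (hΨ.inner_self_ne_zero h0 hc), hk] at h₂
  show (δ, ((r - k * (c - c') : ℤ) : ℝ)) ∈ Ψ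
  convert h₂ using 2
  · module
  · push_cast
    ring

lemma mul_mem_DiffSetT (hΨ : IsSubrootSystem (twistedRS R a b m) Ψ) (h0 : (0 : V) ∉ R)
    (hδ : δ ∈ GrT Ψ) {k : ℤ} (hk : cartanPair γ δ = k) {d : ℤ} (hd : d ∈ DiffSetT Ψ γ) :
    k * d ∈ DiffSetT Ψ δ := by
  obtain ⟨c, hc⟩ := hΨ.ZSetT_nonempty hδ
  obtain ⟨r, hr, r', hr', rfl⟩ := hd
  exact ⟨c, hc, _, hΨ.sub_mul_sub_mem_ZSetT h0 hk hr hr' hc, by ring⟩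

lemma DiffSetT_subset_of_cartanPair (hΨ : IsSubrootSystem (twistedRS R a b m) Ψ)
    (h0 : (0 : V) ∉ R) (hδ : δ ∈ GrT Ψ) (hk : cartanPair γ δ = 1 ∨ cartanPair γ δ = -1) :
    DiffSetT Ψ γ ⊆ DiffSetT Ψ δ := by
  intro d hd
  rcases hk with hk | hk
  · simpa using hΨ.mul_mem_DiffSetT h0 hδ (k := 1) (by exact_mod_cast hk) hd
  · simpa using neg_mem_DiffSetT (hΨ.mul_mem_DiffSetT h0 hδ (k := -1) (by exact_mod_cast hk) hd)

lemma DiffSetT_neg (hΨ : IsSubrootSystem (twistedRS R a b m) Ψ) (h0 : (0 : V) ∉ R) (γ : V) :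
    DiffSetT Ψ (-γ) = DiffSetT Ψ γ := by
  have key (δ : V) : DiffSetT Ψ δ ⊆ DiffSetT Ψ (-δ) := by
    rintro _ ⟨r, hr, r', hr', rfl⟩
    refine ⟨-r', ?_, -r, ?_, by ring⟩ <;> simpa [ZSetT] using hΨ.neg_mem h0 ‹_›
  exact (neg_neg γ ▸ key (-γ)).antisymm (key γ)

lemma dvd_of_mem_DiffSetT (hΨ : IsSubrootSystem (twistedRS R a b m) Ψ) (hab : a ≠ b)
    (hγ : ⟪γ, γ⟫_ℝ = b) {d : ℤ} (hd : d ∈ DiffSetT Ψ γ) : (m : ℤ) ∣ d := by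
  obtain ⟨r, hr, r', hr', rfl⟩ := hd
  exact dvd_sub (dvd_of_mk_mem_twistedRS hab hγ (hΨ.2.1 hr))
    (dvd_of_mk_mem_twistedRS hab hγ (hΨ.2.1 hr'))

lemma DiffSetT_eq_of_inner_self_eq (hΨ : IsSubrootSystem (twistedRS R a b m) Ψ)
    (hR : IsIrreducibleRootSystem R) (hγ : γ ∈ GrT Ψ) (hδ : δ ∈ GrT Ψ)
    (hlen : ⟪γ, γ⟫_ℝ = ⟪δ, δ⟫_ℝ) (hne : ⟪γ, δ⟫_ℝ ≠ 0) : DiffSetT Ψ γ = DiffSetT Ψ δ := by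
  have hγR := hΨ.mem_of_mem_GrT hγ
  have hδR := hΨ.mem_of_mem_GrT hδ
  obtain rfl | h₁ := eq_or_ne δ γ
  · rfl
  obtain rfl | h₂ := eq_or_ne δ (-γ)
  · exact (hΨ.DiffSetT_neg hR.zero_notMem γ).symm
  refine (hΨ.DiffSetT_subset_of_cartanPair hR.zero_notMem hδ ?_).antisymm
    (hΨ.DiffSetT_subset_of_cartanPair hR.zero_notMem hγ ?_)
  · exact cartanPair_eq_one_or_neg_one_of_inner_self_eq (hR.cartan_int γ hγR δ hδR) hlen hne
      h₁ h₂
  · refine cartanPair_eq_one_or_neg_one_of_inner_self_eq (hR.cartan_int δ hδR γ hγR) hlen.symm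
      (by rwa [real_inner_comm]) h₁.symm fun h => h₂ ?_
    rw [h, neg_neg]

end IsSubrootSystem

lemma DiffSetT_inter_dvd_subset (hΨ : IsClosedSubrootSystem (twistedRS R a b m) Ψ)
    (h0 : (0 : V) ∉ R) (hab : a ≠ b) (hδ : LongR R b δ) (hδG : δ ∈ GrT Ψ)
    (hpair : cartanPair δ γ = -1) : DiffSetT Ψ γ ∩ {d : ℤ | (m : ℤ) ∣ d} ⊆ DiffSetT Ψ δ := by
  rintro _ ⟨⟨r, hr, r', hr', rfl⟩, hdvd⟩
  obtain ⟨c, hc⟩ := hΨ.1.ZSetT_nonempty hδG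
  have hsum : (γ + δ, ((r + c : ℤ) : ℝ)) ∈ Ψ := by
    have h := hΨ.1.reflect_mem hc hr
    rw [hpair] at h
    convert h using 2
    · module
    · push_cast
      ring
  have hdiff : (m : ℤ) ∣ r + c - r' := by
    have h := dvd_add (hdvd : (m : ℤ) ∣ r - r') (dvd_of_mk_mem_twistedRS hab hδ.2 (hΨ.1.2.1 hc))
    rwa [show r - r' + c = r + c - r' by ring] at h
  have heq : ((γ + δ, ((r + c : ℤ) : ℝ)) : V × ℝ) + (-γ, -(r' : ℝ)) =
      (δ, ((r + c - r' : ℤ) : ℝ)) :=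
    Prod.ext (by simp) (by push_cast; simp only [Prod.snd_add]; ring)
  have hmem := hΨ.2 _ hsum _ (hΨ.1.neg_mem h0 hr') (heq ▸ mk_mem_twistedRS_of_dvd hδ hdiff)
  exact ⟨r + c - r', show (δ, ((r + c - r' : ℤ) : ℝ)) ∈ Ψ from heq ▸ hmem, c, hc, by ring⟩

lemma DiffSetT_inter_dvd_eq_of_short_of_long (hT : IsTwistedData R a b m)
    (hΨ : IsClosedSubrootSystem (twistedRS R a b m) Ψ) (hγG : γ ∈ GrT Ψ) (hδG : δ ∈ GrT Ψ)
    (hγ : ⟪γ, γ⟫_ℝ = a) (hδ : LongR R b δ) (hne : ⟪γ, δ⟫_ℝ ≠ 0) :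
    DiffSetT Ψ γ ∩ {d : ℤ | (m : ℤ) ∣ d} = DiffSetT Ψ δ := by
  have h0 := hT.root.zero_notMem
  have hab := hT.a_lt_b.ne
  have hm : (2 : ℝ) ≤ m := by rcases hT.m23 with h | h <;> norm_num [h]
  have hpair : cartanPair δ γ = 1 ∨ cartanPair δ γ = -1 :=
    cartanPair_eq_one_or_neg_one_of_two_mul_le
      (hT.root.cartan_int δ hδ.1 γ (hΨ.1.mem_of_mem_GrT hγG))
      (by rw [hγ, hδ.2, hT.ratio]; nlinarith [hT.a_pos]) (by rwa [real_inner_comm])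
  refine Set.Subset.antisymm ?_ fun d hd =>
    ⟨hΨ.1.DiffSetT_subset_of_cartanPair h0 hγG hpair hd, hΨ.1.dvd_of_mem_DiffSetT hab hδ.2 hd⟩
  rcases hpair with hpair | hpair
  · rw [← hΨ.1.DiffSetT_neg h0 δ]
    have hnegG := hΨ.1.neg_mem_GrT h0 hδG
    refine DiffSetT_inter_dvd_subset hΨ h0 hab ⟨hΨ.1.mem_of_mem_GrT hnegG, ?_⟩ hnegG ?_
    · rw [inner_neg_neg, hδ.2]
    · rw [cartanPair_neg_left, hpair]
  · exact DiffSetT_inter_dvd_subset hΨ h0 hab hδ hδG hpair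

lemma DiffSetT_inter_dvd_eq_of_inner_ne_zero (hT : IsTwistedData R a b m)
    (hΨ : IsClosedSubrootSystem (twistedRS R a b m) Ψ) (hγ : γ ∈ GrT Ψ) (hδ : δ ∈ GrT Ψ)
    (hne : ⟪γ, δ⟫_ℝ ≠ 0) :
    DiffSetT Ψ γ ∩ {d : ℤ | (m : ℤ) ∣ d} = DiffSetT Ψ δ ∩ {d : ℤ | (m : ℤ) ∣ d} := by
  have hγR := hΨ.1.mem_of_mem_GrT hγ
  have hδR := hΨ.1.mem_of_mem_GrT hδ
  have hlong {β : V} (hβ : ⟪β, β⟫_ℝ = b) :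
      DiffSetT Ψ β ∩ {d : ℤ | (m : ℤ) ∣ d} = DiffSetT Ψ β :=
    Set.inter_eq_left.2 fun _ => hΨ.1.dvd_of_mem_DiffSetT hT.a_lt_b.ne hβ
  rcases hT.len γ hγR with hγa | hγb <;> rcases hT.len δ hδR with hδa | hδb
  · rw [hΨ.1.DiffSetT_eq_of_inner_self_eq hT.root hγ hδ (hγa.trans hδa.symm) hne]
  · rw [DiffSetT_inter_dvd_eq_of_short_of_long hT hΨ hγ hδ hγa ⟨hδR, hδb⟩ hne, hlong hδb]
  · rw [DiffSetT_inter_dvd_eq_of_short_of_long hT hΨ hδ hγ hδa ⟨hγR, hγb⟩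
      (by rwa [real_inner_comm]), hlong hγb]
  · rw [hΨ.1.DiffSetT_eq_of_inner_self_eq hT.root hγ hδ (hγb.trans hδb.symm) hne]

end Twisted

theorem statement9_general
    {V : Type*} [NormedAddCommGroup V] [InnerProductSpace ℝ V]
    (R : Set V) (a b : ℝ) (m : ℕ) (hT : IsTwistedData R a b m)
    (Ψ : Set (V × ℝ)) (hΨ : IsClosedSubrootSystem (twistedRS R a b m) Ψ)
    (hirr : IsIrreducibleSubset (GrT Ψ)) :
    ∀ α ∈ GrT Ψ, ShortR R a α → ∀ β ∈ GrT Ψ, LongR R b β →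
      DiffSetT Ψ α ∩ {d : ℤ | (m : ℤ) ∣ d} = DiffSetT Ψ β := by
  intro α hα _ β hβ hβl
  rw [hirr.eq_of_forall_inner_ne_zero (f := fun γ => DiffSetT Ψ γ ∩ {d : ℤ | (m : ℤ) ∣ d})
    (fun _ hγ _ hδ => DiffSetT_inter_dvd_eq_of_inner_ne_zero hT hΨ hγ hδ) hα hβ]
  exact Set.inter_eq_left.2 fun _ => hΨ.1.dvd_of_mem_DiffSetT hT.a_lt_b.ne hβl.2

/-- For a closed subroot system `Ψ` of a twisted affine root system
whose gradient is irreducible and contains both a short and a long root, for every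
short `α` and long `β` in `Gr(Ψ)`,
`{r − r' : r, r' ∈ Z_α(Ψ)} ∩ mℤ = {r − r' : r, r' ∈ Z_β(Ψ)}`. -/
theorem statement9
    {V : Type*} [NormedAddCommGroup V] [InnerProductSpace ℝ V] [FiniteDimensional ℝ V]
    (R : Set V) (a b : ℝ) (m : ℕ) (hT : IsTwistedData R a b m)
    (Ψ : Set (V × ℝ)) (hΨ : IsClosedSubrootSystem (twistedRS R a b m) Ψ)
    (hirr : IsIrreducibleSubset (GrT Ψ))
    (hs : ∃ α ∈ GrT Ψ, ShortR R a α) (hl : ∃ β ∈ GrT Ψ, LongR R b β) :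
    ∀ α ∈ GrT Ψ, ShortR R a α → ∀ β ∈ GrT Ψ, LongR R b β →
      DiffSetT Ψ α ∩ {d : ℤ | (m : ℤ) ∣ d} = DiffSetT Ψ β :=
  statement9_general R a b m hT Ψ hΨ hirr
end
end
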